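/- For every integer d ≥ 2, the map ψ_o : D^{d-1} → SC_d(1,1;o) defined by ψ_o(x) = ((x/2 + P_{1/4}, 1/4), ((−x_1/2, …, −x_{d-1}/2, 0), 1/2)) is well defined, i.e. for every x ∈ D^{d-1} the ball (x/2 + P_{1/4}, 1/4) is contained in the closed upper unit semiball, the semiball ((−x_1/2,…,−x_{d-1}/2,0), 1/2) is contained in the closed upper unit semiball, and the two are nonoverlapping; moreover ψ_o is a topological embedding, and its restriction to S^{d-2} is the map x ↦ ((x/2 + P_{1/4}, 1/4), (−x/2, 1/2)). -/

import Mathlib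

noncomputable section

/-- The last index of `Fin d` (corresponding to the last coordinate `x_d`). -/
def lastIdx (d : ℕ) (hd : 2 ≤ d) : Fin d := ⟨d - 1, by omega⟩

/-- The point `P_{1/4} = (0, …, 0, 1/4)` of `ℝ^d`. -/
def Pquarter (d : ℕ) (hd : 2 ≤ d) : EuclideanSpace ℝ (Fin d) :=
  EuclideanSpace.single (lastIdx d hd) 4⁻¹

/-- The configuration space `SC_d(1,1;o)` of one ball and one nonoverlapping semiball in
the closed upper unit semiball of `ℝ^d`. -/
def SC11 (d : ℕ) (hd : 2 ≤ d) :
    Set ((EuclideanSpace ℝ (Fin d) × ℝ) × (EuclideanSpace ℝ (Fin d) × ℝ)) :=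
  {c | 0 < c.1.2 ∧ 0 < c.2.2 ∧
       c.1.1 (lastIdx d hd) ≥ c.1.2 ∧ ‖c.1.1‖ + c.1.2 ≤ 1 ∧
       c.2.1 (lastIdx d hd) = 0 ∧ ‖c.2.1‖ + c.2.2 ≤ 1 ∧
       ‖c.1.1 - c.2.1‖ ≥ c.1.2 + c.2.2}

/-- The closed disc `D^{d-1} = {x ∈ S^{d-1} : x_d ≥ 0}`. -/
def upperHemi (d : ℕ) (hd : 2 ≤ d) : Set (EuclideanSpace ℝ (Fin d)) :=
  {z | ‖z‖ = 1 ∧ z (lastIdx d hd) ≥ 0}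

/-- The raw formula of `ψ_o`, sending `x` to
`((x/2 + P_{1/4}, 1/4), ((−x_1/2, …, −x_{d-1}/2, 0), 1/2))`; the second center is
`−x/2` with its last coordinate replaced by `0`. -/
def psiO (d : ℕ) (hd : 2 ≤ d) :
    EuclideanSpace ℝ (Fin d) →
      (EuclideanSpace ℝ (Fin d) × ℝ) × (EuclideanSpace ℝ (Fin d) × ℝ) :=
  fun x =>
    (((2 : ℝ)⁻¹ • x + Pquarter d hd, 4⁻¹),
     (-((2 : ℝ)⁻¹ • x) + EuclideanSpace.single (lastIdx d hd) (x (lastIdx d hd) / 2), 2⁻¹))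

namespace EuclideanSpace

variable {ι : Type*} [DecidableEq ι]

@[fun_prop]
theorem continuous_single {𝕜 : Type*} [RCLike 𝕜] (i : ι) :
    Continuous (single i : 𝕜 → EuclideanSpace 𝕜 ι) :=
  (PiLp.continuous_toLp 2 _).comp (_root_.continuous_single (A := fun _ ↦ 𝕜) i)

theorem norm_add_single_sq [Fintype ι] (x : EuclideanSpace ℝ ι) (i : ι) (a : ℝ) :
    ‖x + single i a‖ ^ 2 = ‖x‖ ^ 2 + 2 * a * x i + a ^ 2 := by
  rw [norm_add_sq_real, real_inner_comm, inner_single_left, PiLp.norm_single, Real.norm_eq_abs,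
    sq_abs, conj_trivial]
  ring

end EuclideanSpace

section psiO

variable (d : ℕ) (hd : 2 ≤ d)

theorem norm_Pquarter : ‖Pquarter d hd‖ = 4⁻¹ := by
  simp [Pquarter]

@[simp]
theorem psiO_fst_snd (x : EuclideanSpace ℝ (Fin d)) : (psiO d hd x).1.2 = 4⁻¹ := rfl

@[simp]
theorem psiO_snd_snd (x : EuclideanSpace ℝ (Fin d)) : (psiO d hd x).2.2 = 2⁻¹ := rfl

theorem psiO_fst_fst_apply_lastIdx (x : EuclideanSpace ℝ (Fin d)) :
    (psiO d hd x).1.1 (lastIdx d hd) = x (lastIdx d hd) / 2 + 4⁻¹ := by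
  simp only [psiO, Pquarter, PiLp.add_apply, PiLp.smul_apply, smul_eq_mul, PiLp.single_eq_same]
  ring

theorem psiO_snd_fst_apply_lastIdx (x : EuclideanSpace ℝ (Fin d)) :
    (psiO d hd x).2.1 (lastIdx d hd) = 0 := by
  simp only [psiO, PiLp.add_apply, PiLp.neg_apply, PiLp.smul_apply, smul_eq_mul,
    PiLp.single_eq_same]
  ring

theorem norm_psiO_snd_fst_sq (x : EuclideanSpace ℝ (Fin d)) :
    ‖(psiO d hd x).2.1‖ ^ 2 = (‖x‖ ^ 2 - x (lastIdx d hd) ^ 2) / 4 := by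
  rw [psiO, EuclideanSpace.norm_add_single_sq, norm_neg, norm_smul]
  simp only [PiLp.neg_apply, PiLp.smul_apply, smul_eq_mul, norm_inv, Real.norm_ofNat]
  ring

theorem psiO_fst_fst_sub_snd_fst (x : EuclideanSpace ℝ (Fin d)) :
    (psiO d hd x).1.1 - (psiO d hd x).2.1 =
      x + EuclideanSpace.single (lastIdx d hd) (4⁻¹ - x (lastIdx d hd) / 2) := by
  simp only [psiO, Pquarter, EuclideanSpace.single, PiLp.single_sub]
  module

theorem continuous_psiO : Continuous (psiO d hd) := by
  unfold psiO
  fun_prop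

theorem isEmbedding_psiO : Topology.IsEmbedding (psiO d hd) := by
  refine Function.LeftInverse.isEmbedding (f := fun c => (2 : ℝ) • (c.1.1 - Pquarter d hd))
    (fun x => ?_) (by fun_prop) (continuous_psiO d hd)
  simp [psiO, smul_smul]

variable {d hd}

theorem psiO_mem_SC11 {x : EuclideanSpace ℝ (Fin d)} (hx : x ∈ upperHemi d hd) :
    psiO d hd x ∈ SC11 d hd := by
  obtain ⟨hx_norm, ht_nonneg⟩ := hx
  set t := x (lastIdx d hd)
  have ht_le : t ≤ 1 := by
    simpa [hx_norm, Real.norm_eq_abs] using (le_abs_self t).trans (PiLp.norm_apply_le x _)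
  refine ⟨by norm_num, by norm_num, ?_, ?_, psiO_snd_fst_apply_lastIdx d hd x, ?_, ?_⟩
  · rw [psiO_fst_fst_apply_lastIdx, psiO_fst_snd]
    linarith
  · calc ‖(psiO d hd x).1.1‖ + (psiO d hd x).1.2 ≤ ‖(2 : ℝ)⁻¹ • x‖ + ‖Pquarter d hd‖ + 4⁻¹ := by
          rw [psiO_fst_snd]; gcongr; exact norm_add_le _ _
      _ = 1 := by rw [norm_smul, hx_norm, norm_Pquarter]; norm_num
  · have h := norm_psiO_snd_fst_sq d hd x
    rw [hx_norm] at h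
    have : ‖(psiO d hd x).2.1‖ ≤ 2⁻¹ :=
      (sq_le_sq₀ (norm_nonneg _) (by norm_num)).mp (by rw [h]; nlinarith)
    rw [psiO_snd_snd]
    linarith
  · -- `‖x + (1/4 - t/2) e_d‖² - (3/4)² = (1 - t)(2 + 3t)/4 ≥ 0`
    have h := EuclideanSpace.norm_add_single_sq x (lastIdx d hd) (4⁻¹ - t / 2)
    rw [hx_norm, ← psiO_fst_fst_sub_snd_fst] at h
    have : (3 / 4 : ℝ) ≤ ‖(psiO d hd x).1.1 - (psiO d hd x).2.1‖ :=
      (sq_le_sq₀ (by norm_num) (norm_nonneg _)).mp (by rw [h]; nlinarith)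
    rw [psiO_fst_snd, psiO_snd_snd]
    linarith

theorem psiO_of_apply_lastIdx_eq_zero {x : EuclideanSpace ℝ (Fin d)} (hx : x (lastIdx d hd) = 0) :
    psiO d hd x = (((2 : ℝ)⁻¹ • x + Pquarter d hd, 4⁻¹), (-((2 : ℝ)⁻¹ • x), 2⁻¹)) := by
  simp [psiO, hx]

end psiO

/-- For every integer `d ≥ 2`, the map `ψ_o : D^{d-1} → SC_d(1,1;o)`,
`x ↦ ((x/2 + P_{1/4}, 1/4), ((−x_1/2, …, −x_{d-1}/2, 0), 1/2))`, is well defined,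
is a topological embedding, and its restriction to `S^{d-2}` is the map
`x ↦ ((x/2 + P_{1/4}, 1/4), (−x/2, 1/2))`. -/
theorem swissCheese_psiO_embedding (d : ℕ) (hd : 2 ≤ d) :
    (∀ x ∈ upperHemi d hd, psiO d hd x ∈ SC11 d hd) ∧
    Topology.IsEmbedding (fun x : upperHemi d hd => psiO d hd x.1) ∧
    (∀ x ∈ upperHemi d hd, x (lastIdx d hd) = 0 →
      psiO d hd x = (((2 : ℝ)⁻¹ • x + Pquarter d hd, 4⁻¹), (-((2 : ℝ)⁻¹ • x), 2⁻¹))) :=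
  ⟨fun _ hx => psiO_mem_SC11 hx,
    (isEmbedding_psiO d hd).comp .subtypeVal,
    fun _ _ hx => psiO_of_apply_lastIdx_eq_zero hx⟩
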